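/- arXiv:2105.12062 — 7 statements merged into one kernel-verified Lean document; each statement's English description precedes it below -/
import Mathlib

section
/- Under the setting of M-OGM-G with ∑_{k=0}^{N}(δ_{k+1}/2)‖∇f(x_k)‖² ≤ 12LΔ₀/((N+2)(N+3)) and δ_{k+1} = 12/((N-k+1)(N-k+2)(N-k+3)), the minimum gradient satisfies min_{0≤k≤N} ‖∇f(x_k)‖² ≤ 8LΔ₀/((N+2)(N+3) - 2). -/
/-!
The weights telescope: `δ_{k+1}/2 = 3/((a+1)(a+2)) - 3/((a+2)(a+3))` with `a = N - k`, so they sum to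
`3/2 - 3/((N+2)(N+3))`. The minimum of the `g_k` times the total weight is at most the weighted sum,
which is bounded by `12LΔ/((N+2)(N+3))`; dividing out gives the bound.
-/

open Finset

lemma Finset.inf'_mul_sum_le_sum_mul {ι R : Type*} [CommSemiring R] [LinearOrder R]
    [IsOrderedRing R] (s : Finset ι) (hs : s.Nonempty) (w g : ι → R)
    (hw : ∀ i ∈ s, 0 ≤ w i) :
    s.inf' hs g * ∑ i ∈ s, w i ≤ ∑ i ∈ s, w i * g i := by
  rw [mul_sum]
  refine sum_le_sum fun i hi => ?_
  rw [mul_comm]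
  exact mul_le_mul_of_nonneg_left (inf'_le g hi) (hw i hi)

lemma twelve_div_cubic_half_eq_sub {a : ℝ} (ha : 0 ≤ a) :
    12 / ((a + 1) * (a + 2) * (a + 3)) / 2
      = 3 / ((a + 1) * (a + 2)) - 3 / ((a + 2) * (a + 3)) := by
  field_simp
  ring

lemma sum_range_twelve_div_cubic_half (N : ℕ) :
    ∑ k ∈ range (N + 1), 12 / (((N : ℝ) - k + 1) * ((N : ℝ) - k + 2) * ((N : ℝ) - k + 3)) / 2
      = 3 / 2 - 3 / (((N : ℝ) + 2) * ((N : ℝ) + 3)) := by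
  set v : ℕ → ℝ := fun k => 3 / (((N : ℝ) - k + 2) * ((N : ℝ) - k + 3))
  have hterm : ∀ k ∈ range (N + 1),
      12 / (((N : ℝ) - k + 1) * ((N : ℝ) - k + 2) * ((N : ℝ) - k + 3)) / 2 = v (k + 1) - v k := by
    intro k hk
    have hkN : (k : ℝ) ≤ N := by exact_mod_cast Nat.lt_succ_iff.mp (mem_range.mp hk)
    rw [twelve_div_cubic_half_eq_sub (sub_nonneg.mpr hkN)]
    simp only [v]
    push_cast
    ring_nf
  rw [sum_congr rfl hterm, sum_range_sub]
  simp only [v]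
  push_cast
  norm_num

theorem stmt_9_general {d : ℕ} (L Δ : ℝ) (N : ℕ)
    (f : EuclideanSpace ℝ (Fin d) → ℝ) (x : ℕ → EuclideanSpace ℝ (Fin d))
    (hsum : ∑ k ∈ Finset.range (N + 1),
        12 / (((N : ℝ) - k + 1) * ((N : ℝ) - k + 2) * ((N : ℝ) - k + 3)) / 2 *
          ‖gradient f (x k)‖ ^ 2
        ≤ 12 * L * Δ / (((N : ℝ) + 2) * ((N : ℝ) + 3))) :
    (Finset.range (N + 1)).inf' (Finset.nonempty_range_iff.mpr (Nat.succ_ne_zero N))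
        (fun k => ‖gradient f (x k)‖ ^ 2)
      ≤ 8 * L * Δ / (((N : ℝ) + 2) * ((N : ℝ) + 3) - 2) := by
  set m := (range (N + 1)).inf' (nonempty_range_iff.mpr (Nat.succ_ne_zero N))
    (fun k => ‖gradient f (x k)‖ ^ 2)
  set P : ℝ := ((N : ℝ) + 2) * ((N : ℝ) + 3)
  have hP6 : 6 ≤ P := by nlinarith [(Nat.cast_nonneg N : (0 : ℝ) ≤ N)]
  have hweights : ∀ k ∈ range (N + 1),
      0 ≤ 12 / (((N : ℝ) - k + 1) * ((N : ℝ) - k + 2) * ((N : ℝ) - k + 3)) / 2 := by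
    intro k hk
    have hkN : (k : ℝ) ≤ N := by exact_mod_cast Nat.lt_succ_iff.mp (mem_range.mp hk)
    have : 0 ≤ (N : ℝ) - k := sub_nonneg.mpr hkN
    positivity
  have key : m * (3 / 2 - 3 / P) ≤ 12 * L * Δ / P := by
    rw [← sum_range_twelve_div_cubic_half]
    exact (inf'_mul_sum_le_sum_mul _ _ _ _ hweights).trans hsum
  have hmul : m * (3 / 2 - 3 / P) = 3 / 2 * (m * (P - 2)) / P := by
    field_simp
  rw [hmul, div_le_div_iff_of_pos_right (by linarith)] at key
  rw [le_div_iff₀ (by linarith)]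
  linarith

theorem stmt_9 {d : ℕ} (L Δ : ℝ) (hL : 0 < L) (N : ℕ)
    (f : EuclideanSpace ℝ (Fin d) → ℝ) (x : ℕ → EuclideanSpace ℝ (Fin d))
    (hsum : ∑ k ∈ Finset.range (N + 1),
        12 / (((N : ℝ) - k + 1) * ((N : ℝ) - k + 2) * ((N : ℝ) - k + 3)) / 2 *
          ‖gradient f (x k)‖ ^ 2
        ≤ 12 * L * Δ / (((N : ℝ) + 2) * ((N : ℝ) + 3))) :
    (Finset.range (N + 1)).inf' (Finset.nonempty_range_iff.mpr (Nat.succ_ne_zero N))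
        (fun k => ‖gradient f (x k)‖ ^ 2)
      ≤ 8 * L * Δ / (((N : ℝ) + 2) * ((N : ℝ) + 3) - 2) :=
  stmt_9_general L Δ N f x hsum
end

section
/- Let f be convex with f^δ(x) = f(x) + (δ/2)‖x - x₀‖² for δ > 0, and let x⋆_δ be the unique minimizer of f^δ. Then for every minimizer x⋆ of f, ‖x₀ - x⋆_δ‖² + ‖x⋆ - x⋆_δ‖² ≤ ‖x₀ - x⋆‖²; in particular ‖x₀ - x⋆_δ‖ ≤ ‖x₀ - x⋆‖. -/
/-!
Both claims follow from quadratic growth of the `δ`-strongly convex function `f^δ` at its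
minimizer: `f^δ(x⋆_δ) + δ/2 ‖x⋆ - x⋆_δ‖² ≤ f^δ(x⋆)`. Expanding `f^δ` and using
`f(x⋆) ≤ f(x⋆_δ)` leaves exactly `‖x⋆_δ - x₀‖² + ‖x⋆ - x⋆_δ‖² ≤ ‖x⋆ - x₀‖²`.
-/

open Filter Topology

section InnerProductSpace

variable {E : Type*} [NormedAddCommGroup E] [InnerProductSpace ℝ E] {s : Set E} {f : E → ℝ}

-- `m/2 * ‖x - x₀‖² - m/2 * ‖x‖²` is affine in `x`.
theorem ConvexOn.strongConvexOn_add_sq_norm_sub (hf : ConvexOn ℝ s f) (m : ℝ) (x₀ : E) :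
    StrongConvexOn s m fun x ↦ f x + m / 2 * ‖x - x₀‖ ^ 2 := by
  rw [strongConvexOn_iff_convex]
  have hlin : ConvexOn ℝ s fun x ↦ (-m) * inner ℝ x₀ x + m / 2 * ‖x₀‖ ^ 2 :=
    (((-m) • innerₛₗ ℝ x₀).convexOn hf.1).add_const _
  have hsplit : (fun x ↦ f x + m / 2 * ‖x - x₀‖ ^ 2 - m / 2 * ‖x‖ ^ 2) =
      f + fun x ↦ (-m) * inner ℝ x₀ x + m / 2 * ‖x₀‖ ^ 2 := by
    ext x
    rw [Pi.add_apply, norm_sub_sq_real, real_inner_comm]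
    ring
  exact hsplit ▸ hf.add hlin

theorem StrongConvexOn.add_sq_norm_sub_le_of_isMinOn {m : ℝ} {x y : E}
    (hf : StrongConvexOn s m f) (hmin : IsMinOn f s x) (hx : x ∈ s) (hy : y ∈ s) :
    f x + m / 2 * ‖y - x‖ ^ 2 ≤ f y := by
  -- Minimality of `x` along the segment `[x, y]` gives the bound with a factor `1 - t`; let `t → 0`.
  set D := m / 2 * ‖y - x‖ ^ 2
  have hstep : ∀ t ∈ Set.Ioo (0 : ℝ) 1, f x + (1 - t) * D ≤ f y := by
    rintro t ⟨ht₀, ht₁⟩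
    have hseg : (1 - t) • x + t • y ∈ s := hf.1 hx hy (by linarith) ht₀.le (by ring)
    have hconv : f ((1 - t) • x + t • y) ≤ (1 - t) * f x + t * f y - (1 - t) * t * D := by
      simpa only [smul_eq_mul, norm_sub_rev x y] using hf.2 hx hy (by linarith) ht₀.le (by ring)
    have hmin' : f x ≤ f ((1 - t) • x + t • y) := hmin hseg
    have : t * (f x + (1 - t) * D) ≤ t * f y := by nlinarith
    exact le_of_mul_le_mul_left this ht₀
  have hlim : Tendsto (fun t : ℝ ↦ f x + (1 - t) * D) (𝓝[>] 0) (𝓝 (f x + D)) := by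
    have : Continuous fun t : ℝ ↦ f x + (1 - t) * D := by fun_prop
    simpa using (this.tendsto 0).mono_left nhdsWithin_le_nhds
  exact le_of_tendsto hlim (eventually_of_mem (Ioo_mem_nhdsGT one_pos) hstep)

end InnerProductSpace

theorem stmt_12_general {d : ℕ} (δ : ℝ) (hδ : 0 < δ)
    (f : EuclideanSpace ℝ (Fin d) → ℝ) (x₀ xd : EuclideanSpace ℝ (Fin d))
    (hconv : ConvexOn ℝ Set.univ f)
    (g : EuclideanSpace ℝ (Fin d) → ℝ)
    (hg : ∀ x, g x = f x + δ / 2 * ‖x - x₀‖ ^ 2)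
    (hxd : ∀ y, g xd ≤ g y) :
    ∀ xs : EuclideanSpace ℝ (Fin d), (∀ y, f xs ≤ f y) →
      ‖x₀ - xd‖ ^ 2 + ‖xs - xd‖ ^ 2 ≤ ‖x₀ - xs‖ ^ 2 ∧ ‖x₀ - xd‖ ≤ ‖x₀ - xs‖ := by
  intro xs hxs
  obtain rfl : g = fun x ↦ f x + δ / 2 * ‖x - x₀‖ ^ 2 := funext hg
  have hgrowth := (hconv.strongConvexOn_add_sq_norm_sub δ x₀).add_sq_norm_sub_le_of_isMinOn
    (fun y _ ↦ hxd y) (Set.mem_univ xd) (Set.mem_univ xs)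
  have hsq : ‖x₀ - xd‖ ^ 2 + ‖xs - xd‖ ^ 2 ≤ ‖x₀ - xs‖ ^ 2 := by
    rw [norm_sub_rev x₀ xd, norm_sub_rev x₀ xs]
    nlinarith [hxs xd]
  exact ⟨hsq, (pow_le_pow_iff_left₀ (norm_nonneg _) (norm_nonneg _) two_ne_zero).mp
    (by nlinarith [sq_nonneg ‖xs - xd‖])⟩

theorem stmt_12 {d : ℕ} (δ : ℝ) (hδ : 0 < δ)
    (f : EuclideanSpace ℝ (Fin d) → ℝ) (x₀ xd : EuclideanSpace ℝ (Fin d))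
    (hdiff : Differentiable ℝ f) (hconv : ConvexOn ℝ Set.univ f)
    (g : EuclideanSpace ℝ (Fin d) → ℝ)
    (hg : ∀ x, g x = f x + δ / 2 * ‖x - x₀‖ ^ 2)
    (hxd : ∀ y, g xd ≤ g y) :
    ∀ xs : EuclideanSpace ℝ (Fin d), (∀ y, f xs ≤ f y) →
      ‖x₀ - xd‖ ^ 2 + ‖xs - xd‖ ^ 2 ≤ ‖x₀ - xs‖ ^ 2 ∧ ‖x₀ - xd‖ ≤ ‖x₀ - xs‖ :=
  stmt_12_general δ hδ f x₀ xd hconv g hg hxd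
end

section
/- Let f be convex with minimizer x⋆, δ > 0, f^δ(x) = f(x) + (δ/2)‖x - x₀‖², and x⋆_δ the minimizer of f^δ. Then ‖x₀ - x⋆_δ‖² ≤ (2/δ)(f(x₀) - f(x⋆)). -/
theorem sq_norm_sub_le_of_isMin_add_sq_norm_sub {E : Type*} [SeminormedAddCommGroup E]
    {f : E → ℝ} {δ : ℝ} (hδ : 0 < δ) {x₀ xs xd : E} (hxs : ∀ y, f xs ≤ f y)
    (hxd : ∀ y, f xd + δ / 2 * ‖xd - x₀‖ ^ 2 ≤ f y + δ / 2 * ‖y - x₀‖ ^ 2) :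
    ‖x₀ - xd‖ ^ 2 ≤ 2 / δ * (f x₀ - f xs) := by
  have key : f xs + δ / 2 * ‖x₀ - xd‖ ^ 2 ≤ f x₀ :=
    calc f xs + δ / 2 * ‖x₀ - xd‖ ^ 2
        ≤ f xd + δ / 2 * ‖xd - x₀‖ ^ 2 := by rw [norm_sub_rev]; linarith [hxs xd]
      _ ≤ f x₀ + δ / 2 * ‖x₀ - x₀‖ ^ 2 := hxd x₀
      _ = f x₀ := by simp
  rw [div_mul_eq_mul_div, le_div_iff₀ hδ]
  linarith

theorem stmt_13_general {d : ℕ} (δ : ℝ) (hδ : 0 < δ)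
    (f : EuclideanSpace ℝ (Fin d) → ℝ) (x₀ xs xd : EuclideanSpace ℝ (Fin d))
    (hxs : ∀ y, f xs ≤ f y)
    (g : EuclideanSpace ℝ (Fin d) → ℝ)
    (hg : ∀ x, g x = f x + δ / 2 * ‖x - x₀‖ ^ 2)
    (hxd : ∀ y, g xd ≤ g y) :
    ‖x₀ - xd‖ ^ 2 ≤ 2 / δ * (f x₀ - f xs) :=
  sq_norm_sub_le_of_isMin_add_sq_norm_sub hδ hxs fun y => by simpa only [hg] using hxd y

theorem stmt_13 {d : ℕ} (δ : ℝ) (hδ : 0 < δ)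
    (f : EuclideanSpace ℝ (Fin d) → ℝ) (x₀ xs xd : EuclideanSpace ℝ (Fin d))
    (hdiff : Differentiable ℝ f) (hconv : ConvexOn ℝ Set.univ f)
    (hxs : ∀ y, f xs ≤ f y)
    (g : EuclideanSpace ℝ (Fin d) → ℝ)
    (hg : ∀ x, g x = f x + δ / 2 * ‖x - x₀‖ ^ 2)
    (hxd : ∀ y, g xd ≤ g y) :
    ‖x₀ - xd‖ ^ 2 ≤ 2 / δ * (f x₀ - f xs) :=
  stmt_13_general δ hδ f x₀ xs xd hxs g hg hxd
end

section
/- Shifting lemma: Let 𝒢, z⁻, y, x⋆ ∈ ℝ^d, α, δ > 0, and let z⁺ = argmin_x {⟨𝒢, x⟩ + (α/2)‖x - z⁻‖² + (δ/2)‖x - y‖²}. If ℋ = 𝒢 - δ(y - x⋆), then ⟨ℋ, z⁻ - x⋆⟩ = (α/2)(‖z⁻ - x⋆‖² - (1 + δ/α)²‖z⁺ - x⋆‖²) + (1/(2α))‖ℋ‖². -/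
open RealInnerProductSpace

theorem inner_smul_sub_smul_self_eq {E : Type*} [NormedAddCommGroup E] [InnerProductSpace ℝ E]
    {α : ℝ} (hα : α ≠ 0) (β : ℝ) (a b : E) :
    ⟪α • a - β • b, a⟫ = α / 2 * (‖a‖ ^ 2 - (β / α) ^ 2 * ‖b‖ ^ 2)
      + 1 / (2 * α) * ‖α • a - β • b‖ ^ 2 := by
  rw [norm_sub_sq_real, norm_smul, norm_smul, mul_pow, mul_pow, Real.norm_eq_abs,
    Real.norm_eq_abs, sq_abs, sq_abs, inner_sub_left, real_inner_smul_left, real_inner_smul_left,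
    real_inner_smul_left, real_inner_smul_right, real_inner_self_eq_norm_sq, real_inner_comm a b]
  field_simp
  ring

theorem sub_smul_sub_eq_of_optimality {M : Type*} [AddCommGroup M] [Module ℝ M]
    {α δ : ℝ} {G zm zp y xs : M} (hopt : G + α • (zp - zm) + δ • (zp - y) = 0) :
    G - δ • (y - xs) = α • (zm - xs) - (α + δ) • (zp - xs) := by
  linear_combination (norm := module) hopt

theorem stmt_14_general {d : ℕ} (α δ : ℝ) (hα : 0 < α)
    (G H zm zp y xs : EuclideanSpace ℝ (Fin d))
    (hopt : G + α • (zp - zm) + δ • (zp - y) = 0)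
    (hH : H = G - δ • (y - xs)) :
    (inner ℝ (H) (zm - xs) : ℝ) = α / 2 * (‖zm - xs‖ ^ 2 - (1 + δ / α) ^ 2 * ‖zp - xs‖ ^ 2)
      + 1 / (2 * α) * ‖H‖ ^ 2 := by
  have hshift : 1 + δ / α = (α + δ) / α := by field_simp
  rw [hH, sub_smul_sub_eq_of_optimality hopt, hshift]
  exact inner_smul_sub_smul_self_eq hα.ne' _ _ _

theorem stmt_14 {d : ℕ} (α δ : ℝ) (hα : 0 < α) (hδ : 0 < δ)
    (G H zm zp y xs : EuclideanSpace ℝ (Fin d))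
    (hopt : G + α • (zp - zm) + δ • (zp - y) = 0)
    (hH : H = G - δ • (y - xs)) :
    (inner ℝ (H) (zm - xs) : ℝ) = α / 2 * (‖zm - xs‖ ^ 2 - (1 + δ / α) ^ 2 * ‖zp - xs‖ ^ 2)
      + 1 / (2 * α) * ‖H‖ ^ 2 :=
  stmt_14_general α δ hα G H zm zp y xs hopt hH
end

section
/- Fix n ≥ 1 and κ > 1, and consider the cubic s(x) = x³ - (2n-3)x² - (2nκ + n - 3)x - nκ + 1. Then s has a unique positive root, and this root satisfies x ≤ 2n + 2√(nκ). -/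
/-!
Writing `s(x) = x³ - a x² - b x - c` with `b, c ≥ 0`, the function `s(x) / x² = x - a - b/x - c/x²`
is strictly increasing on `(0, ∞)`, so `s` has at most one positive root, and that root lies below
every `M > 0` with `s(M) > 0`. Here `b = 2nκ + n - 3 > 0`, `c = nκ - 1 > 0`, so `s(0) = -c < 0`;
and with `r = √(nκ)` every coefficient of `s(2n + 2r)`, as a polynomial in `n` and `r`, is positive.
-/

open Set

namespace Cubic

def eval (a b c x : ℝ) : ℝ := x ^ 3 - a * x ^ 2 - b * x - c

variable {a b c : ℝ}

lemma continuous_eval (a b c : ℝ) : Continuous (eval a b c) := by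
  unfold eval; fun_prop

lemma strictMonoOn_eval_div_sq (hb : 0 ≤ b) (hc : 0 ≤ c) :
    StrictMonoOn (fun x => eval a b c x / x ^ 2) (Ioi 0) := by
  intro u (hu : 0 < u) v (hv : 0 < v) huv
  rw [div_lt_div_iff₀ (by positivity) (by positivity)]
  -- `u² s(v) - v² s(u) = (v - u) (u²v² + b uv + c (u + v))`
  have hfactor : 0 < (v - u) * (u ^ 2 * v ^ 2 + b * (u * v) + c * (u + v)) := by
    apply mul_pos (sub_pos.mpr huv)
    have : 0 ≤ b * (u * v) + c * (u + v) := by positivity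
    nlinarith [pow_pos (mul_pos hu hv) 2]
  unfold eval
  nlinarith [hfactor]

lemma pos_root_unique (hb : 0 ≤ b) (hc : 0 ≤ c) {x y : ℝ} (hx : 0 < x) (hy : 0 < y)
    (hsx : eval a b c x = 0) (hsy : eval a b c y = 0) : x = y :=
  (strictMonoOn_eval_div_sq hb hc).injOn hx hy (by rw [hsx, hsy, zero_div, zero_div])

lemma pos_root_le (hb : 0 ≤ b) (hc : 0 ≤ c) {M x : ℝ} (hM : 0 < M) (hsM : 0 < eval a b c M)
    (hx : 0 < x) (hsx : eval a b c x = 0) : x ≤ M := by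
  by_contra! hMx
  have : eval a b c M / M ^ 2 < eval a b c x / x ^ 2 :=
    strictMonoOn_eval_div_sq hb hc hM hx hMx
  rw [hsx, zero_div] at this
  exact (div_pos hsM (by positivity)).not_gt this

lemma exists_pos_root (hc : 0 < c) {M : ℝ} (hM : 0 ≤ M) (hsM : 0 < eval a b c M) :
    ∃ x, 0 < x ∧ eval a b c x = 0 := by
  have hs0 : eval a b c 0 < 0 := by simp [eval, hc]
  obtain ⟨x, hx, hsx⟩ :=
    intermediate_value_Ioo hM (continuous_eval a b c).continuousOn ⟨hs0, hsM⟩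
  exact ⟨x, hx.1, hsx⟩

lemma eval_two_mul_add_pos {n r : ℝ} (hn : 0 ≤ n) (hr : 0 ≤ r) :
    0 < eval (2 * n - 3) (2 * r ^ 2 + n - 3) (r ^ 2 - 1) (2 * n + 2 * r) := by
  have : eval (2 * n - 3) (2 * r ^ 2 + n - 3) (r ^ 2 - 1) (2 * n + 2 * r) =
      8 * n ^ 2 * r + 10 * n ^ 2 + 12 * n * r ^ 2 + 22 * n * r + 4 * r ^ 3 + 11 * r ^ 2
        + 6 * n + 6 * r + 1 := by
    unfold eval; ring
  rw [this]
  positivity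

end Cubic

theorem stmt_15 (n : ℕ) (hn : 1 ≤ n) (κ : ℝ) (hκ : 1 < κ) :
    (∃! x : ℝ, 0 < x ∧
        x ^ 3 - (2 * (n : ℝ) - 3) * x ^ 2 - (2 * n * κ + n - 3) * x - n * κ + 1 = 0) ∧
      ∀ x : ℝ, 0 < x →
        x ^ 3 - (2 * (n : ℝ) - 3) * x ^ 2 - (2 * n * κ + n - 3) * x - n * κ + 1 = 0 →
        x ≤ 2 * n + 2 * Real.sqrt (n * κ) := by
  have hn1 : (1 : ℝ) ≤ n := by exact_mod_cast hn
  set r := Real.sqrt (n * κ)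
  have hr2 : r ^ 2 = n * κ := Real.sq_sqrt (by positivity)
  have hs : ∀ x : ℝ, x ^ 3 - (2 * (n : ℝ) - 3) * x ^ 2 - (2 * n * κ + n - 3) * x - n * κ + 1 =
      Cubic.eval (2 * n - 3) (2 * r ^ 2 + n - 3) (r ^ 2 - 1) x := by
    intro x; rw [hr2]; unfold Cubic.eval; ring
  simp only [hs]
  have hb : 0 ≤ 2 * r ^ 2 + n - 3 := by nlinarith
  have hc : 0 < r ^ 2 - 1 := by nlinarith
  have hM := Cubic.eval_two_mul_add_pos (n := n) (by positivity) (Real.sqrt_nonneg (n * κ))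
  obtain ⟨x, hx, hsx⟩ := Cubic.exists_pos_root hc (by positivity) hM
  refine ⟨⟨x, ⟨hx, hsx⟩, fun y ⟨hy, hsy⟩ => Cubic.pos_root_unique hb hc.le hy hx hsy hsx⟩,
    fun y hy hsy => Cubic.pos_root_le hb hc.le (by positivity) hM hy hsy⟩
end

section
/- Let p_k = max{6/(k+8), 1/n} and τ_k = 3/(p_k(k+8)) for k ≥ 0, with integer n ≥ 1. Then for every k ≥ 0, ((1 - τ_{k+1}p_{k+1})(1 - τ_{k+1}))/(τ_{k+1}² p_{k+1}) ≤ (1 - τ_k)/(τ_k² p_k). -/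
/-!
Substituting τ = 3 / (p m) with m = k + 8 turns both sides into polynomials: the right side is
m (p m - 3) / 9 and the left side is (m - 2) (p' (m + 1) - 3) / 9. Since p m = max 6 (m / n) grows
by at most 1 / n from m to m + 1, and 2 (p m - 3) ≥ p m ≥ m / n, the loss (m - 2) / n is absorbed
by the factor m versus m - 2.
-/

lemma one_sub_div_div_sq_mul_eq {p m : ℝ} (hp : p ≠ 0) (hm : m ≠ 0) :
    (1 - 3 / (p * m)) / ((3 / (p * m)) ^ 2 * p) = m * (p * m - 3) / 9 := by
  field_simp
  ring

lemma one_sub_mul_one_sub_div_div_sq_mul_eq {p m : ℝ} (hp : p ≠ 0) (hm : m ≠ 0) :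
    (1 - 3 / (p * m) * p) * (1 - 3 / (p * m)) / ((3 / (p * m)) ^ 2 * p) =
      (m - 3) * (p * m - 3) / 9 := by
  field_simp
  ring

lemma max_div_mul_self {m : ℝ} (hm : 0 < m) (c : ℝ) : max (6 / m) c * m = max 6 (c * m) := by
  rw [max_mul_of_nonneg _ _ hm.le, div_mul_cancel₀ _ hm.ne']

lemma sub_two_mul_max_sub_three_le {c m : ℝ} (hc : 0 ≤ c) (hm : 2 ≤ m) :
    (m + 1 - 3) * (max 6 (c * (m + 1)) - 3) ≤ m * (max 6 (c * m) - 3) := by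
  have hX := le_max_left 6 (c * m)
  have hcm := le_max_right 6 (c * m)
  have hstep : max 6 (c * (m + 1)) ≤ max 6 (c * m) + c :=
    max_le (by linarith) (by linarith)
  calc (m + 1 - 3) * (max 6 (c * (m + 1)) - 3)
      ≤ (m + 1 - 3) * (max 6 (c * m) + c - 3) :=
        mul_le_mul_of_nonneg_left (by linarith) (by linarith)
    _ ≤ m * (max 6 (c * m) - 3) := by nlinarith

theorem stmt_17_general (n : ℕ) (p τ : ℕ → ℝ)
    (hp : ∀ k, p k = max (6 / ((k : ℝ) + 8)) (1 / (n : ℝ)))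
    (hτ : ∀ k, τ k = 3 / (p k * ((k : ℝ) + 8))) :
    ∀ k, (1 - τ (k + 1) * p (k + 1)) * (1 - τ (k + 1)) / (τ (k + 1) ^ 2 * p (k + 1)) ≤
      (1 - τ k) / (τ k ^ 2 * p k) := by
  intro k
  have hm : (0 : ℝ) < k + 8 := by positivity
  have hm' : ((k + 1 : ℕ) : ℝ) + 8 = (k + 8) + 1 := by push_cast; ring
  have hp_pos : ∀ j, 0 < p j := fun j ↦ (hp j).symm ▸ lt_max_of_lt_left (by positivity)
  rw [hτ, hτ, one_sub_div_div_sq_mul_eq (hp_pos k).ne' hm.ne',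
    one_sub_mul_one_sub_div_div_sq_mul_eq (hp_pos _).ne' (by positivity), hm', hp, hp, hm',
    max_div_mul_self hm, max_div_mul_self (by positivity)]
  apply div_le_div_of_nonneg_right _ (by norm_num)
  exact sub_two_mul_max_sub_three_le (by positivity) (by linarith)

theorem stmt_17 (n : ℕ) (hn : 1 ≤ n) (p τ : ℕ → ℝ)
    (hp : ∀ k, p k = max (6 / ((k : ℝ) + 8)) (1 / (n : ℝ)))
    (hτ : ∀ k, τ k = 3 / (p k * ((k : ℝ) + 8))) :
    ∀ k, (1 - τ (k + 1) * p (k + 1)) * (1 - τ (k + 1)) / (τ (k + 1) ^ 2 * p (k + 1)) ≤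
      (1 - τ k) / (τ k ^ 2 * p k) :=
  stmt_17_general n p τ hp hτ
end

section
/- Let p_k ≡ 1/n and τ_k = 3/(k/n + 6) for integer n ≥ 1 and k ≥ 0. Then for every k ≥ 0, ((1 - τ_{k+1}p_{k+1})(1 - τ_{k+1}))/(τ_{k+1}² p_{k+1}) ≤ (1 - τ_k)/(τ_k² p_k). -/
section StepSize

variable {N y : ℝ}

theorem one_sub_div_sq_mul_inv_eq (hN : 0 < N) (hy : 0 ≤ y) :
    (1 - 3 / (y / N + 6)) / ((3 / (y / N + 6)) ^ 2 * (1 / N)) =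
      (y + 3 * N) * (y + 6 * N) / (9 * N) := by
  field_simp
  ring

theorem one_sub_mul_one_sub_div_sq_mul_inv_eq (hN : 0 < N) (hy : 0 ≤ y) :
    (1 - 3 / (y / N + 6) * (1 / N)) * (1 - 3 / (y / N + 6)) /
        ((3 / (y / N + 6)) ^ 2 * (1 / N)) =
      (y + 6 * N - 3) * (y + 3 * N) / (9 * N) := by
  field_simp
  ring

end StepSize

theorem stmt_18 (n : ℕ) (hn : 1 ≤ n) (p τ : ℕ → ℝ)
    (hp : ∀ k, p k = 1 / (n : ℝ))
    (hτ : ∀ k, τ k = 3 / ((k : ℝ) / n + 6)) :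
    ∀ k, (1 - τ (k + 1) * p (k + 1)) * (1 - τ (k + 1)) / (τ (k + 1) ^ 2 * p (k + 1)) ≤
      (1 - τ k) / (τ k ^ 2 * p k) := by
  intro k
  have hN : (0 : ℝ) < n := by exact_mod_cast hn
  have hk : (0 : ℝ) ≤ k := k.cast_nonneg
  rw [hp, hp, hτ, hτ, one_sub_mul_one_sub_div_sq_mul_inv_eq hN (by positivity),
    one_sub_div_sq_mul_inv_eq hN hk]
  refine div_le_div_of_nonneg_right ?_ (by positivity)
  have numerator_gap : ((k + 1 : ℕ) + 6 * n - 3 : ℝ) * ((k + 1 : ℕ) + 3 * n) =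
      (k + 3 * n) * (k + 6 * n) - (k + 2) := by
    push_cast
    ring
  linarith
end
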